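/- Let H be the group presented by ⟨e₀, e₁, e₂, e₃, e₄ ∣ e₁e₄⁻¹e₂⁻¹e₃e₁⁻¹e₀, e₃⁻¹e₀e₂e₁⁻¹e₃e₄⁻¹, e₂e₃⁻¹e₀⁻², e₂⁻¹e₁e₄², e₂⟩ (the four boundary relators of the dual 2-cells together with the tree relator e₂). Then H is isomorphic to G, via an isomorphism sending e₀ ↦ a, e₄ ↦ b, e₂ ↦ 1, e₃ ↦ a⁻², and e₁ ↦ b⁻². -/

import Mathlib

/-- The generator `a` of the free group on two generators. -/
def fa : FreeGroup (Fin 2) := FreeGroup.of 0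
/-- The generator `b` of the free group on two generators. -/
def fb : FreeGroup (Fin 2) := FreeGroup.of 1

/-- The two relators `(b·a²)·(a³·b²)⁻¹` and `(b²·a)·(a²·b³)⁻¹`. -/
def csRels : Set (FreeGroup (Fin 2)) :=
  {(fb * fa ^ 2) * (fa ^ 3 * fb ^ 2)⁻¹, (fb ^ 2 * fa) * (fa ^ 2 * fb ^ 3)⁻¹}

/-- The group `G = ⟨a, b ∣ b·a² = a³·b², b²·a = a²·b³⟩`. -/
abbrev G : Type := PresentedGroup csRels

/-- The image of `a` in `G`. -/
def ga : G := PresentedGroup.of 0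
/-- The image of `b` in `G`. -/
def gb : G := PresentedGroup.of 1

/-- The generators `e₀,…,e₄` of the free group on five generators. -/
def fe (i : Fin 5) : FreeGroup (Fin 5) := FreeGroup.of i

/-- The relators `e₁e₄⁻¹e₂⁻¹e₃e₁⁻¹e₀`, `e₃⁻¹e₀e₂e₁⁻¹e₃e₄⁻¹`, `e₂e₃⁻¹e₀⁻²`, `e₂⁻¹e₁e₄²`,
together with the tree relator `e₂`. -/
def dualRels : Set (FreeGroup (Fin 5)) :=
  {fe 1 * (fe 4)⁻¹ * (fe 2)⁻¹ * fe 3 * (fe 1)⁻¹ * fe 0,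
   (fe 3)⁻¹ * fe 0 * fe 2 * (fe 1)⁻¹ * fe 3 * (fe 4)⁻¹,
   fe 2 * (fe 3)⁻¹ * (fe 0)⁻¹ * (fe 0)⁻¹,
   (fe 2)⁻¹ * fe 1 * fe 4 * fe 4,
   fe 2}

/-- The group `H = ⟨e₀,…,e₄ ∣ e₁e₄⁻¹e₂⁻¹e₃e₁⁻¹e₀, e₃⁻¹e₀e₂e₁⁻¹e₃e₄⁻¹, e₂e₃⁻¹e₀⁻²,
e₂⁻¹e₁e₄², e₂⟩`. -/
abbrev H : Type := PresentedGroup dualRels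

/-!
Read from the tree relator up, the relators of `H` say `e₂ = 1`, then `e₃ = e₀⁻²` and
`e₁ = e₄⁻²`; substituting these into the two remaining relators leaves exactly the relations
`b·a² = a³·b²` and `b²·a = a²·b³` in `a = e₀`, `b = e₄`. So `e₀ ↦ a, e₄ ↦ b` and its inverse
substitution are mutually inverse homomorphisms (a sequence of Tietze moves).
-/

namespace PresentedGroup

@[simp]
lemma mk_of {α : Type*} {rels : Set (FreeGroup α)} (x : α) :
    mk rels (FreeGroup.of x) = of x :=
  rfl

end PresentedGroup

open PresentedGroup

lemma gb_mul_ga_sq : gb * ga ^ 2 = ga ^ 3 * gb ^ 2 := by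
  simpa [fa, fb, ga, gb] using
    mk_eq_mk_of_mul_inv_mem (rels := csRels) (x := fb * fa ^ 2) (Or.inl rfl)

lemma gb_sq_mul_ga : gb ^ 2 * ga = ga ^ 2 * gb ^ 3 := by
  simpa [fa, fb, ga, gb] using
    mk_eq_mk_of_mul_inv_mem (rels := csRels) (x := fb ^ 2 * fa) (Or.inr rfl)

local notation "e₀" => (of 0 : H)
local notation "e₁" => (of 1 : H)
local notation "e₂" => (of 2 : H)
local notation "e₃" => (of 3 : H)
local notation "e₄" => (of 4 : H)

lemma of_two_eq_one : e₂ = 1 :=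
  one_of_mem (x := fe 2) (.inr <| .inr <| .inr <| .inr rfl)

lemma of_three_eq : e₃ = (e₀ ^ 2)⁻¹ := by
  have h : mk dualRels (fe 2 * (fe 3)⁻¹ * (fe 0)⁻¹ * (fe 0)⁻¹) = 1 :=
    one_of_mem (.inr <| .inr <| .inl rfl)
  simp only [fe, map_mul, map_inv, mk_of, of_two_eq_one] at h
  rw [← inv_mul_eq_one, ← h]
  group

lemma of_one_eq : e₁ = (e₄ ^ 2)⁻¹ := by
  have h : mk dualRels ((fe 2)⁻¹ * fe 1 * fe 4 * fe 4) = 1 :=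
    one_of_mem (.inr <| .inr <| .inr <| .inl rfl)
  simp only [fe, map_mul, map_inv, mk_of, of_two_eq_one] at h
  rw [← mul_inv_eq_one, ← h, inv_inv, inv_one, one_mul, pow_two, mul_assoc]

lemma of_four_mul_of_zero_sq : e₄ * e₀ ^ 2 = e₀ ^ 3 * e₄ ^ 2 := by
  have h : mk dualRels ((fe 3)⁻¹ * fe 0 * fe 2 * (fe 1)⁻¹ * fe 3 * (fe 4)⁻¹) = 1 :=
    one_of_mem (.inr <| .inl rfl)
  simp only [fe, map_mul, map_inv, mk_of, of_one_eq, of_two_eq_one, of_three_eq] at h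
  rw [eq_comm, ← mul_inv_eq_one, ← h]
  group

lemma of_four_sq_mul_of_zero : e₄ ^ 2 * e₀ = e₀ ^ 2 * e₄ ^ 3 := by
  have h : mk dualRels (fe 1 * (fe 4)⁻¹ * (fe 2)⁻¹ * fe 3 * (fe 1)⁻¹ * fe 0) = 1 :=
    one_of_mem (.inl rfl)
  simp only [fe, map_mul, map_inv, mk_of, of_one_eq, of_two_eq_one, of_three_eq] at h
  rw [eq_comm, ← inv_mul_eq_one, ← h]
  group

def hToG : H →* G :=
  toGroup (f := ![ga, (gb ^ 2)⁻¹, 1, (ga ^ 2)⁻¹, gb]) <| by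
    rintro r (rfl | rfl | rfl | rfl | rfl) <;> simp only [fe, map_mul, map_inv,
      FreeGroup.lift_apply_of, Matrix.cons_val, Matrix.cons_val_zero, Matrix.cons_val_one, inv_inv,
      inv_one, mul_one, one_mul]
    · calc _ = (ga ^ 2 * gb ^ 3)⁻¹ * (gb ^ 2 * ga) := by group
        _ = 1 := by rw [gb_sq_mul_ga, inv_mul_cancel]
    · calc _ = ga ^ 3 * gb ^ 2 * (gb * ga ^ 2)⁻¹ := by group
        _ = 1 := by rw [gb_mul_ga_sq, mul_inv_cancel]
    all_goals group

def gToH : G →* H :=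
  toGroup (f := ![e₀, e₄]) <| by
    rintro r (rfl | rfl) <;>
      simp only [fa, fb, map_mul, map_inv, map_pow, FreeGroup.lift_apply_of] <;>
      rw [mul_inv_eq_one]
    · exact of_four_mul_of_zero_sq
    · exact of_four_sq_mul_of_zero

lemma gToH_comp_hToG : gToH.comp hToG = MonoidHom.id H := by
  ext i
  fin_cases i <;> simp [hToG, gToH, ga, gb, of_one_eq, of_two_eq_one, of_three_eq]

lemma hToG_comp_gToH : hToG.comp gToH = MonoidHom.id G := by
  ext i
  fin_cases i <;> simp [hToG, gToH, ga, gb]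

/-- `H` is isomorphic to `G` via an isomorphism sending `e₀ ↦ a`, `e₁ ↦ b⁻²`, `e₂ ↦ 1`,
`e₃ ↦ a⁻²`, `e₄ ↦ b`. -/
theorem dual_presentation_iso :
    ∃ ψ : H ≃* G,
      ψ (PresentedGroup.of 0) = ga ∧
      ψ (PresentedGroup.of 1) = (gb ^ 2)⁻¹ ∧
      ψ (PresentedGroup.of 2) = 1 ∧
      ψ (PresentedGroup.of 3) = (ga ^ 2)⁻¹ ∧
      ψ (PresentedGroup.of 4) = gb := by
  refine ⟨hToG.toMulEquiv gToH gToH_comp_hToG hToG_comp_gToH, ?_, ?_, ?_, ?_, ?_⟩ <;>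
    simp [hToG]
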